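/- Let s ∈ ℂ and let W, M, D, K be N×N complex matrices, F an N×m complex matrix, G a p×N complex matrix. Define the block matrices E = fromBlocks W 0 0 M, A = fromBlocks 0 W (−K) (−D) (both 2N×2N), B = fromBlocks-column (0; F) (2N×m), and C = fromBlocks-row (G, 0) (p×2N). If W is invertible and the polynomial matrix P(s) = s²·M + s·D + K is invertible, then s·E − A is invertible and C · (s·E − A)⁻¹ · B = G · P(s)⁻¹ · F. -/

import Mathlib

/-!
Write `Q = sM + D` and `P = s²M + sD + K = K + sQ`. The pencil `sE - A = [[sW, -W], [K, Q]]`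
factors as `diag(W, 1) · [[1, 0], [-Q, 1]] · diag(1, P) · [[s, -1], [1, 0]]`, a product of units
when `W` and `P` are, and the last factor is unimodular. For the transfer function, the pencil maps
`(P⁻¹F, s P⁻¹F)` to `(0, F)`, so `(sE - A)⁻¹ B` is that block column and `C` picks out `G P⁻¹ F`.
-/

open Matrix

namespace Matrix

variable {R n : Type*} [CommRing R]

theorem smul_fromBlocks_sub_fromBlocks (s : R) (W M D K : Matrix n n R) :
    s • fromBlocks W 0 0 M - fromBlocks 0 W (-K) (-D) = fromBlocks (s • W) (-W) K (s • M + D) := by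
  rw [fromBlocks_smul, sub_eq_add_neg, fromBlocks_neg, fromBlocks_add]
  simp

variable [Fintype n]

theorem smul_fromBlocks_sub_fromBlocks_mul_fromRows {l : Type*} (s : R) (W M D K : Matrix n n R)
    (X : Matrix n l R) :
    (s • fromBlocks W 0 0 M - fromBlocks 0 W (-K) (-D)) * fromRows X (s • X) =
      fromRows 0 ((s ^ 2 • M + s • D + K) * X) := by
  rw [smul_fromBlocks_sub_fromBlocks, fromBlocks_mul_fromRows]
  congr 1
  · simp
  · simp only [Matrix.mul_smul, Matrix.add_mul, Matrix.smul_mul]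
    module

variable [DecidableEq n]

theorem isUnit_fromBlocks_smul_one_neg_one_one_zero (s : R) :
    IsUnit (fromBlocks (s • 1) (-1) 1 0 : Matrix (n ⊕ n) (n ⊕ n) R) :=
  IsUnit.of_mul_eq_one (fromBlocks 0 1 (-1) (s • 1)) <| by
    simp [fromBlocks_multiply, ← fromBlocks_one]

theorem smul_fromBlocks_sub_fromBlocks_eq_mul (s : R) (W M D K : Matrix n n R) :
    s • fromBlocks W 0 0 M - fromBlocks 0 W (-K) (-D) =
      fromBlocks W 0 0 1 * fromBlocks 1 0 (-(s • M + D)) 1 *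
        fromBlocks 1 0 0 (s ^ 2 • M + s • D + K) * fromBlocks (s • 1) (-1) 1 0 := by
  rw [smul_fromBlocks_sub_fromBlocks]
  simp only [fromBlocks_multiply, fromBlocks_inj]
  simp
  module

theorem isUnit_smul_fromBlocks_sub_fromBlocks {s : R} {W M D K : Matrix n n R} (hW : IsUnit W)
    (hP : IsUnit (s ^ 2 • M + s • D + K)) :
    IsUnit (s • fromBlocks W 0 0 M - fromBlocks 0 W (-K) (-D)) := by
  rw [smul_fromBlocks_sub_fromBlocks_eq_mul]
  refine (((?_ : IsUnit _).mul ?_).mul ?_).mul (isUnit_fromBlocks_smul_one_neg_one_one_zero s)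
  all_goals simp [hW, hP]

theorem fromCols_mul_smul_fromBlocks_sub_fromBlocks_inv_mul_fromRows {m p : Type*}
    {s : R} {W M D K : Matrix n n R} (hW : IsUnit W) (hP : IsUnit (s ^ 2 • M + s • D + K))
    (F : Matrix n m R) (G : Matrix p n R) :
    fromCols G (0 : Matrix p n R) * (s • fromBlocks W 0 0 M - fromBlocks 0 W (-K) (-D))⁻¹ *
        fromRows (0 : Matrix n m R) F =
      G * (s ^ 2 • M + s • D + K)⁻¹ * F := by
  have hXV := smul_fromBlocks_sub_fromBlocks_mul_fromRows s W M D K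
    ((s ^ 2 • M + s • D + K)⁻¹ * F)
  rw [mul_nonsing_inv_cancel_left _ _ ((isUnit_iff_isUnit_det _).mp hP)] at hXV
  rw [Matrix.mul_assoc, ← hXV, nonsing_inv_mul_cancel_left _ _
      ((isUnit_iff_isUnit_det _).mp (isUnit_smul_fromBlocks_sub_fromBlocks hW hP)),
    fromCols_mul_fromRows, Matrix.zero_mul, add_zero, Matrix.mul_assoc]

end Matrix

/-- Transfer function of the linearization equals the transfer function
`G P(s)⁻¹ F` of the second-order system. -/
theorem stmt_0 (N m p : ℕ) (s : ℂ)
    (W M D K : Matrix (Fin N) (Fin N) ℂ)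
    (F : Matrix (Fin N) (Fin m) ℂ) (G : Matrix (Fin p) (Fin N) ℂ)
    (hW : IsUnit W) (hP : IsUnit (s ^ 2 • M + s • D + K)) :
    IsUnit (s • fromBlocks W 0 0 M - fromBlocks 0 W (-K) (-D)) ∧
      fromCols G (0 : Matrix (Fin p) (Fin N) ℂ) *
          (s • fromBlocks W 0 0 M - fromBlocks 0 W (-K) (-D))⁻¹ *
          fromRows (0 : Matrix (Fin N) (Fin m) ℂ) F
        = G * (s ^ 2 • M + s • D + K)⁻¹ * F :=
  ⟨isUnit_smul_fromBlocks_sub_fromBlocks hW hP,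
    fromCols_mul_smul_fromBlocks_sub_fromBlocks_inv_mul_fromRows hW hP F G⟩
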